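/- The gap composition rule is transitive in the appropriate sense: in any instance of ST-Realizability, if (a,b) is realizable with gap (c,d) and (c,d) is realizable with gap (e,f), then (a,b) is realizable with gap (e,f). -/

import Mathlib

/-!
Every realizable string begins and ends with the same letter `α i`, so two realizable strings
sharing that end letter can be glued along it; this is the concatenation rule. By induction on
realizability, an occurrence of a letter in a realizable string can therefore be replaced by any
realizable string that begins with that letter. For the gap `(c, d)` the string along `P₁`
followed by `P₂` carries `α (lv c)` at the junction; splicing the realizable string of the inner
instance into it there gives exactly the string of the paths `a ↝ c ↝ e` and `f ↝ d ↝ b`.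
-/

inductive Alph (k : ℕ) where
  | push : Alph k
  | pop : Alph k
  | eps : Alph k
  | alpha : Fin k → Alph k
deriving DecidableEq

inductive Realizable {k : ℕ} : List (Alph k) → Prop
  | single (i : Fin k) : Realizable [Alph.alpha i]
  | base (i : Fin k) : Realizable [Alph.alpha i, Alph.eps, Alph.alpha i]
  | wrap (i : Fin k) {S : List (Alph k)} (h : Realizable S) :
      Realizable ([Alph.alpha i, Alph.push] ++ S ++ [Alph.pop, Alph.alpha i])
  | concat (i : Fin k) {S₁ S₂ : List (Alph k)}
      (h₁ : Realizable ([Alph.alpha i] ++ S₁ ++ [Alph.alpha i]))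
      (h₂ : Realizable ([Alph.alpha i] ++ S₂ ++ [Alph.alpha i])) :
      Realizable ([Alph.alpha i] ++ S₁ ++ [Alph.alpha i] ++ S₂ ++ [Alph.alpha i])

/-- The string of vertex labels and edge labels along a walk given by its vertex list. -/
def labelStr {V : Type*} {k : ℕ} (lv : V → Fin k) (le : V → V → Alph k) :
    List V → List (Alph k)
  | [] => []
  | [v] => [Alph.alpha (lv v)]
  | u :: v :: r => Alph.alpha (lv u) :: le u v :: labelStr lv le (v :: r)

/-- `(a,b)` is realizable with gap `(c,d)`: there are paths `P₁ : a → c`, `P₂ : d → b`,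
the labels of `a`,`b` agree, the labels of `c`,`d` agree, and the concatenation of the
vertex/edge labels along `P₁` followed by `P₂` (identifying `c` with `d`) is realizable. -/
def RealizableWithGap {V : Type*} {k : ℕ} (A : V → V → Prop) (lv : V → Fin k)
    (le : V → V → Alph k) (a c d b : V) : Prop :=
  lv a = lv b ∧ lv c = lv d ∧
    ∃ p q : List V,
      p.head? = some a ∧ p.getLast? = some c ∧ p.Chain' A ∧
      q.head? = some d ∧ q.getLast? = some b ∧ q.Chain' A ∧
      Realizable (labelStr lv le p ++ (labelStr lv le q).tail)

theorem List.append_eq_append_cons {α : Type*} {X Y U B : List α} {x : α}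
    (h : X ++ Y = U ++ x :: B) :
    (∃ B₀, X = U ++ x :: B₀ ∧ B = B₀ ++ Y) ∨ (∃ U₀, U = X ++ U₀ ∧ Y = U₀ ++ x :: B) := by
  rcases List.append_eq_append_iff.mp h with ⟨U₀, hU, hY⟩ | ⟨_ | ⟨z, B₀⟩, hX, hB⟩
  · exact .inr ⟨U₀, hU, hY⟩
  · exact .inr ⟨[], by simp [hX], by simpa using hB.symm⟩
  · obtain ⟨rfl, rfl⟩ : x = z ∧ B = B₀ ++ Y := by simpa using hB
    exact .inl ⟨B₀, hX, rfl⟩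

namespace Realizable

variable {k : ℕ} {S T U B : List (Alph k)} {x : Alph k}

theorem exists_head?_eq_alpha (h : Realizable S) : ∃ i, S.head? = some (.alpha i) := by
  cases h <;> simp

theorem head?_eq_getLast? (h : Realizable S) : S.head? = S.getLast? := by
  induction h <;> simp [List.getLast?_cons, List.getLast?_append]

theorem eq_nil_or_eq_cons_of_append_singleton (h : Realizable (S ++ [x])) :
    S = [] ∨ ∃ S', S = x :: S' := by
  have hx := h.head?_eq_getLast?
  rw [List.getLast?_concat] at hx
  rcases S with _ | ⟨s, S⟩
  · exact .inl rfl
  · exact .inr ⟨S, by simpa using hx⟩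

theorem eq_nil_or_eq_append_singleton_of_cons (h : Realizable (x :: T)) :
    T = [] ∨ ∃ T', T = T' ++ [x] := by
  have hx := h.head?_eq_getLast?.symm
  rcases T.eq_nil_or_concat' with rfl | ⟨T, t, rfl⟩
  · exact .inl rfl
  · rw [← List.cons_append, List.getLast?_concat] at hx
    exact .inr ⟨T, by simpa using hx⟩

theorem glue (h₁ : Realizable (S ++ [x])) (h₂ : Realizable T) (hx : T.head? = some x) :
    Realizable (S ++ T) := by
  obtain ⟨T, rfl⟩ := List.head?_eq_some_iff.mp hx
  obtain ⟨i, rfl⟩ : ∃ i, x = .alpha i := by simpa using h₂.exists_head?_eq_alpha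
  rcases h₁.eq_nil_or_eq_cons_of_append_singleton with rfl | ⟨S, rfl⟩
  · exact h₂
  rcases h₂.eq_nil_or_eq_append_singleton_of_cons with rfl | ⟨T, rfl⟩
  · exact h₁
  simpa using concat i (S₁ := S) (S₂ := T) (by simpa using h₁) (by simpa using h₂)

theorem splice_head (hT : Realizable (x :: T)) (hB : Realizable (x :: B)) :
    Realizable (x :: T ++ B) := by
  rcases hT.eq_nil_or_eq_append_singleton_of_cons with rfl | ⟨T, rfl⟩
  · exact hB
  · simpa using (show Realizable ((x :: T) ++ [x]) by simpa using hT).glue hB rfl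

theorem splice (hS : Realizable (U ++ x :: B)) (hT : Realizable (x :: T)) :
    Realizable (U ++ x :: T ++ B) := by
  obtain ⟨j, rfl⟩ : ∃ j, x = .alpha j := by simpa using hT.exists_head?_eq_alpha
  generalize hS' : U ++ _ :: B = S at hS
  induction hS generalizing U B with
  | single i =>
    obtain ⟨rfl, rfl, rfl⟩ : U = [] ∧ j = i ∧ B = [] := by simpa [List.append_eq_cons_iff] using hS'
    simpa using hT
  | base i =>
    obtain ⟨rfl, rfl, rfl⟩ | ⟨rfl, rfl, rfl⟩ :
        (U = [] ∧ j = i ∧ B = [.eps, .alpha i]) ∨ (U = [.alpha i, .eps] ∧ j = i ∧ B = []) := by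
      simpa [List.append_eq_cons_iff, List.cons_eq_append_iff] using hS'
    · exact hT.splice_head (base j)
    · simpa using (base j).glue (S := [.alpha j, .eps]) hT rfl
  | @wrap i S hS ih =>
    obtain ⟨rfl, rfl, rfl⟩ | ⟨U, rfl, hU⟩ :
        (U = [] ∧ j = i ∧ B = .push :: (S ++ [.pop, .alpha i])) ∨
          ∃ U', U = .alpha i :: .push :: U' ∧ S ++ [.pop, .alpha i] = U' ++ .alpha j :: B := by
      simpa [List.append_eq_cons_iff, List.cons_eq_append_iff] using hS'
    · simpa using hT.splice_head (wrap j hS)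
    rcases List.append_eq_append_cons hU with ⟨B, rfl, rfl⟩ | ⟨U₀, rfl, hU₀⟩
    · simpa using wrap i (ih rfl)
    · obtain ⟨rfl, rfl, rfl⟩ : U₀ = [.pop] ∧ j = i ∧ B = [] := by
        simpa [List.cons_eq_append_iff] using hU₀
      have hwrap : Realizable ((.alpha j :: .push :: S ++ [.pop]) ++ [.alpha j]) := by
        simpa using wrap j hS
      simpa using hwrap.glue hT rfl
  | @concat i S₁ S₂ h₁ h₂ ih₁ ih₂ =>
    have h₁' : Realizable ((.alpha i :: S₁) ++ [.alpha i]) := by simpa using h₁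
    have h₂' : Realizable (.alpha i :: (S₂ ++ [.alpha i])) := by simpa using h₂
    rcases List.append_eq_append_cons (X := .alpha i :: S₁) (by simpa using hS'.symm) with
      ⟨B₀, hX, rfl⟩ | ⟨U₀, rfl, hY⟩
    · have h : Realizable ((U ++ .alpha j :: T ++ B₀) ++ [.alpha i]) := by
        simpa using ih₁ (U := U) (B := B₀ ++ [.alpha i]) (by simp [hX])
      simpa using h.glue h₂' rfl
    · have hhead : (U₀ ++ .alpha j :: T ++ B).head? = some (.alpha i) := by
        simpa [List.head?_append] using (congrArg List.head? hY).symm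
      simpa using h₁'.glue (ih₂ (by simpa using hY.symm)) hhead

end Realizable

section Walk

variable {V : Type*} {k : ℕ}

def IsWalk (A : V → V → Prop) (u v : V) (p : List V) : Prop :=
  p.head? = some u ∧ p.getLast? = some v ∧ p.IsChain A

theorem IsWalk.append_tail {A : V → V → Prop} {u v w : V} {p q : List V}
    (hp : IsWalk A u v p) (hq : IsWalk A v w q) : IsWalk A u w (p ++ q.tail) := by
  obtain ⟨hpu, hpv, hpA⟩ := hp
  obtain ⟨hqv, hqw, hqA⟩ := hq
  obtain ⟨p, rfl⟩ := List.getLast?_eq_some_iff.mp hpv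
  obtain ⟨q, rfl⟩ := List.head?_eq_some_iff.mp hqv
  refine ⟨by simpa [List.head?_append] using hpu, by simpa using hqw, ?_⟩
  simpa using hpA.append_overlap hqA (List.cons_ne_nil v [])

variable (lv : V → Fin k) (le : V → V → Alph k)

theorem exists_labelStr_eq_cons {u : V} {p : List V} (h : p.head? = some u) :
    ∃ T, labelStr lv le p = .alpha (lv u) :: T := by
  obtain ⟨_ | ⟨v, p⟩, rfl⟩ := List.head?_eq_some_iff.mp h <;> simp [labelStr]

theorem exists_labelStr_eq_append_singleton {v : V} :
    ∀ {p : List V}, p.getLast? = some v → ∃ U, labelStr lv le p = U ++ [.alpha (lv v)]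
  | [], h => by simp at h
  | [u], h => by
    obtain rfl : u = v := by simpa using h
    exact ⟨[], rfl⟩
  | u :: w :: p, h => by
    obtain ⟨U, hU⟩ := exists_labelStr_eq_append_singleton (p := w :: p) (by simpa using h)
    exact ⟨.alpha (lv u) :: le u w :: U, by simp [labelStr, hU]⟩

theorem labelStr_append_tail {v : V} :
    ∀ {p q : List V}, p.getLast? = some v → q.head? = some v →
      labelStr lv le (p ++ q.tail) = labelStr lv le p ++ (labelStr lv le q).tail
  | [], _, hp, _ => by simp at hp
  | [u], q, hp, hq => by
    obtain rfl : u = v := by simpa using hp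
    obtain ⟨q, rfl⟩ := List.head?_eq_some_iff.mp hq
    obtain ⟨T, hT⟩ := exists_labelStr_eq_cons lv le (p := u :: q) rfl
    simp [labelStr, hT]
  | u :: w :: p, q, hp, hq => by
    have ih := labelStr_append_tail (p := w :: p) (by simpa using hp) hq
    rw [List.cons_append] at ih
    simp [labelStr, ih]

theorem realizableWithGap_iff {A : V → V → Prop} {a b c d : V} :
    RealizableWithGap A lv le a c d b ↔ lv a = lv b ∧ lv c = lv d ∧
      ∃ p q, IsWalk A a c p ∧ IsWalk A d b q ∧
        Realizable (labelStr lv le p ++ (labelStr lv le q).tail) := by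
  simp only [RealizableWithGap, IsWalk, and_assoc]; rfl

end Walk

/-- The gap composition rule: if `(a,b)` is realizable with gap `(c,d)` and `(c,d)` is
realizable with gap `(e,f)`, then `(a,b)` is realizable with gap `(e,f)`. -/
theorem realizableWithGap_trans {V : Type*} {k : ℕ} (A : V → V → Prop)
    (lv : V → Fin k) (le : V → V → Alph k) (a b c d e f : V)
    (h₁ : RealizableWithGap A lv le a c d b)
    (h₂ : RealizableWithGap A lv le c e f d) :
    RealizableWithGap A lv le a e f b := by
  rw [realizableWithGap_iff] at h₁ h₂ ⊢
  obtain ⟨hab, -, p, q, hp, hq, hpq⟩ := h₁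
  obtain ⟨-, hef, p', q', hp', hq', hpq'⟩ := h₂
  refine ⟨hab, hef, p ++ p'.tail, q' ++ q.tail, hp.append_tail hp', hq'.append_tail hq, ?_⟩
  rw [labelStr_append_tail lv le hp.2.1 hp'.1, labelStr_append_tail lv le hq'.2.1 hq.1]
  obtain ⟨U, hU⟩ := exists_labelStr_eq_append_singleton lv le hp.2.1
  obtain ⟨T, hT⟩ := exists_labelStr_eq_cons lv le hp'.1
  obtain ⟨T', hT'⟩ := exists_labelStr_eq_cons lv le hq'.1
  rw [hU, List.append_assoc, List.singleton_append] at hpq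
  rw [hT, List.cons_append] at hpq'
  simpa [hU, hT, hT'] using hpq.splice hpq'
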